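/- arXiv:2402.16710 — 9 statements merged into one kernel-verified Lean document; each statement's English description precedes it below -/
import Mathlib

section
/- Let K ≥ 2, let c : {1,…,K} → ℝ satisfy c_a > 0 for all a, and let μ : {1,…,K} → ℝ have a unique maximizer a*(μ). Suppose N : {1,…,K} → ℝ with N_a ≥ 0 for all a, and L ≥ 0 are such that for every λ ∈ Alt(μ) one has Σ_{a=1}^K N_a·(μ_a − λ_a)²/2 ≥ L. Then (Σ_{a=1}^K c_a N_a) · ( sup_{w ∈ Σ_K} inf_{λ ∈ Alt(μ)} Σ_{a=1}^K (w_a/c_a)·(μ_a − λ_a)²/2 ) ≥ L. (This is the deterministic core of the cost lower bound of Theorem 1 for unit-variance Gaussian bandits: any vector of expected pull counts satisfying the transportation constraints at level L incurs cumulative cost at least T*(μ)·L, where T*(μ)⁻¹ is the displayed sup-inf.) -/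
open Finset

section SupInf

variable {ι Λ : Type*} [Fintype ι]

lemma div_sum_mem_stdSimplex {f : ι → ℝ} (hf : ∀ a, 0 ≤ f a) (hS : 0 < ∑ a, f a) :
    (fun a => f a / ∑ b, f b) ∈ stdSimplex ℝ ι :=
  ⟨fun a => div_nonneg (hf a) hS.le, by rw [← sum_div, div_self hS.ne']⟩

lemma bddBelow_range_weighted_sum {c : ι → ℝ} (hc : ∀ a, 0 < c a) (w : stdSimplex ℝ ι)
    {D : Λ → ι → ℝ} (hD : ∀ l a, 0 ≤ D l a) :
    BddBelow (Set.range fun l => ∑ a, w.1 a / c a * D l a) :=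
  ⟨0, Set.forall_mem_range.2 fun l =>
    sum_nonneg fun a _ => mul_nonneg (div_nonneg (w.2.1 a) (hc a).le) (hD l a)⟩

lemma bddAbove_range_iInf_weighted_sum [Nonempty Λ] {c : ι → ℝ} (hc : ∀ a, 0 < c a)
    {D : Λ → ι → ℝ} (hD : ∀ l a, 0 ≤ D l a) :
    BddAbove (Set.range fun w : stdSimplex ℝ ι => ⨅ l, ∑ a, w.1 a / c a * D l a) := by
  obtain ⟨l₀⟩ := ‹Nonempty Λ›
  refine ⟨∑ a, 1 / c a * D l₀ a, Set.forall_mem_range.2 fun w => ?_⟩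
  calc ⨅ l, ∑ a, w.1 a / c a * D l a
      ≤ ∑ a, w.1 a / c a * D l₀ a := ciInf_le (bddBelow_range_weighted_sum hc w hD) l₀
    _ ≤ ∑ a, 1 / c a * D l₀ a := by
      gcongr with a
      · exact hD l₀ a
      · exact (hc a).le
      · exact stdSimplex.le_one w a

lemma eq_zero_of_sum_mul_eq_zero {c N : ι → ℝ} (hc : ∀ a, 0 < c a) (hN : ∀ a, 0 ≤ N a)
    (hS : ∑ a, c a * N a = 0) (a : ι) : N a = 0 := by
  have hcN := (sum_eq_zero_iff_of_nonneg fun b _ => mul_nonneg (hc b).le (hN b)).1 hS a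
    (mem_univ a)
  exact (mul_eq_zero.1 hcN).resolve_left (hc a).ne'

/-- Weighting the simplex point `w ∝ c • N` turns the `w / c`-weighted objective into the
`N`-weighted one divided by the total cost `∑ c • N`. -/
theorem le_sum_mul_iSup_iInf [Nonempty Λ] {c N : ι → ℝ} (hc : ∀ a, 0 < c a)
    (hN : ∀ a, 0 ≤ N a) {D : Λ → ι → ℝ} (hD : ∀ l a, 0 ≤ D l a) {L : ℝ}
    (hL : ∀ l, L ≤ ∑ a, N a * D l a) :
    L ≤ (∑ a, c a * N a) * ⨆ w : stdSimplex ℝ ι, ⨅ l, ∑ a, w.1 a / c a * D l a := by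
  set S := ∑ a, c a * N a
  have hcN : ∀ a, 0 ≤ c a * N a := fun a => mul_nonneg (hc a).le (hN a)
  rcases (show 0 ≤ S from sum_nonneg fun a _ => hcN a).eq_or_lt with hS | hS
  · obtain ⟨l₀⟩ := ‹Nonempty Λ›
    rw [← hS, zero_mul]
    simpa [eq_zero_of_sum_mul_eq_zero hc hN hS.symm] using hL l₀
  · let w : stdSimplex ℝ ι := ⟨fun a => c a * N a / S, div_sum_mem_stdSimplex hcN hS⟩
    have hw : L / S ≤ ⨅ l, ∑ a, w.1 a / c a * D l a := by
      refine le_ciInf fun l => ?_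
      have hsum : ∑ a, w.1 a / c a * D l a = (∑ a, N a * D l a) / S := by
        rw [sum_div]
        refine sum_congr rfl fun a _ => ?_
        show c a * N a / S / c a * D l a = N a * D l a / S
        field_simp [(hc a).ne']
      rw [hsum]
      exact div_le_div_of_nonneg_right (hL l) hS.le
    calc L = S * (L / S) := (mul_div_cancel₀ L hS.ne').symm
      _ ≤ S * ⨆ w : stdSimplex ℝ ι, ⨅ l, ∑ a, w.1 a / c a * D l a := by
        gcongr
        exact hw.trans (le_ciSup (bddAbove_range_iInf_weighted_sum hc hD) w)

end SupInf

theorem cost_lower_bound_core_general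
    (K : ℕ) (hK : 2 ≤ K)
    (c μ N : Fin K → ℝ)
    (hc : ∀ a, 0 < c a)
    (astar : Fin K)
    (hN : ∀ a, 0 ≤ N a)
    (L : ℝ)
    (htrans : ∀ lam : Fin K → ℝ, (∃ a, a ≠ astar ∧ lam astar < lam a) →
      L ≤ ∑ a, N a * (μ a - lam a) ^ 2 / 2) :
    L ≤ (∑ a, c a * N a) *
      (⨆ w : {w : Fin K → ℝ // (∀ a, 0 ≤ w a) ∧ ∑ a, w a = 1},
        ⨅ lam : {lam : Fin K → ℝ // ∃ a, a ≠ astar ∧ lam astar < lam a},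
          ∑ a, (w.1 a / c a) * (μ a - lam.1 a) ^ 2 / 2) := by
  have hnontrivial : Nontrivial (Fin K) := Fin.nontrivial_iff_two_le.2 hK
  obtain ⟨b, hb⟩ := exists_ne astar
  have hAltNonempty : Nonempty {lam : Fin K → ℝ // ∃ a, a ≠ astar ∧ lam astar < lam a} :=
    ⟨⟨Pi.single b 1, b, hb, by simp [hb.symm]⟩⟩
  have hbound := le_sum_mul_iSup_iInf hc hN
    (D := fun (lam : {lam : Fin K → ℝ // ∃ a, a ≠ astar ∧ lam astar < lam a}) a =>
      (μ a - lam.1 a) ^ 2 / 2) (fun _ _ => by positivity)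
    (fun lam => (htrans lam.1 lam.2).trans_eq (by simp only [mul_div_assoc]))
  simp only [mul_div_assoc] at hbound ⊢
  exact hbound

/-- deterministic core of the cost lower bound (Theorem 1) for
unit-variance Gaussian bandits. Any vector of expected pull counts `N`
satisfying the transportation constraints at level `L` incurs cumulative
cost at least `T*(μ) · L`, where `T*(μ)⁻¹` is the sup over the simplex of
the inf over the alternative set of the cost-weighted transportation cost. -/
theorem cost_lower_bound_core
    (K : ℕ) (hK : 2 ≤ K)
    (c μ N : Fin K → ℝ)
    (hc : ∀ a, 0 < c a)
    (astar : Fin K) (hstar : ∀ a, a ≠ astar → μ a < μ astar)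
    (hN : ∀ a, 0 ≤ N a)
    (L : ℝ) (hL : 0 ≤ L)
    (htrans : ∀ lam : Fin K → ℝ, (∃ a, a ≠ astar ∧ lam astar < lam a) →
      L ≤ ∑ a, N a * (μ a - lam a) ^ 2 / 2) :
    L ≤ (∑ a, c a * N a) *
      (⨆ w : {w : Fin K → ℝ // (∀ a, 0 ≤ w a) ∧ ∑ a, w a = 1},
        ⨅ lam : {lam : Fin K → ℝ // ∃ a, a ≠ astar ∧ lam astar < lam a},
          ∑ a, (w.1 a / c a) * (μ a - lam.1 a) ^ 2 / 2) :=
  cost_lower_bound_core_general K hK c μ N hc astar hN L htrans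
end

section
/- Let μ₁ > μ₂ be real numbers and c₁, c₂ > 0. Suppose N₁, N₂ ≥ 0 and L ≥ 0 are such that for all real λ₁, λ₂ with λ₁ ≤ λ₂ one has N₁·(μ₁ − λ₁)²/2 + N₂·(μ₂ − λ₂)²/2 ≥ L. Then c₁N₁ + c₂N₂ ≥ 2(√c₁ + √c₂)²·L/(μ₁ − μ₂)². (This is the deterministic core of Corollary 2: in a two-armed unit-variance Gaussian bandit, pull counts satisfying the transportation constraints at level L incur cumulative cost at least 2(√c₁+√c₂)²L/(μ₁−μ₂)².) -/
/-- deterministic core of Corollary 2. In a two-armed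
unit-variance Gaussian bandit, pull counts satisfying the transportation
constraints at level `L` incur cumulative cost at least
`2(√c₁+√c₂)²·L/(μ₁−μ₂)²`. -/
theorem two_arm_cost_lower_bound_core
    (μ₁ μ₂ c₁ c₂ N₁ N₂ L : ℝ)
    (hμ : μ₂ < μ₁)
    (hc₁ : 0 < c₁) (hc₂ : 0 < c₂)
    (hN₁ : 0 ≤ N₁) (hN₂ : 0 ≤ N₂) (hL : 0 ≤ L)
    (htrans : ∀ lam₁ lam₂ : ℝ, lam₁ ≤ lam₂ →
      L ≤ N₁ * (μ₁ - lam₁) ^ 2 / 2 + N₂ * (μ₂ - lam₂) ^ 2 / 2) :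
    2 * (Real.sqrt c₁ + Real.sqrt c₂) ^ 2 * L / (μ₁ - μ₂) ^ 2 ≤ c₁ * N₁ + c₂ * N₂ := by
  have hΔ : 0 < μ₁ - μ₂ := sub_pos.mpr hμ
  have hΔ2 : 0 < (μ₁ - μ₂) ^ 2 := by positivity
  have hs1 : Real.sqrt c₁ ^ 2 = c₁ := Real.sq_sqrt hc₁.le
  have hs2 : Real.sqrt c₂ ^ 2 = c₂ := Real.sq_sqrt hc₂.le
  have hs1n : 0 ≤ Real.sqrt c₁ := Real.sqrt_nonneg _
  have hs2n : 0 ≤ Real.sqrt c₂ := Real.sqrt_nonneg _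
  rcases eq_or_lt_of_le (by positivity : (0:ℝ) ≤ N₁ + N₂) with hS | hS
  · have h1 : N₁ = 0 := by linarith
    have h2 : N₂ = 0 := by linarith
    have hL0 : L ≤ 0 := by
      have := htrans μ₂ μ₂ le_rfl
      simpa [h1, h2] using this
    have : L = 0 := le_antisymm hL0 hL
    simp [h1, h2, this]
  · set S := N₁ + N₂ with hSdef
    have hkey : L ≤ N₁ * N₂ * (μ₁ - μ₂) ^ 2 / (2 * S) := by
      have := htrans ((N₁ * μ₁ + N₂ * μ₂) / S) ((N₁ * μ₁ + N₂ * μ₂) / S) le_rfl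
      have h1 : μ₁ - (N₁ * μ₁ + N₂ * μ₂) / S = N₂ * (μ₁ - μ₂) / S := by
        field_simp
        ring
      have h2 : μ₂ - (N₁ * μ₁ + N₂ * μ₂) / S = -(N₁ * (μ₁ - μ₂) / S) := by
        field_simp
        ring
      rw [h1, h2] at this
      calc L ≤ N₁ * (N₂ * (μ₁ - μ₂) / S) ^ 2 / 2 + N₂ * (-(N₁ * (μ₁ - μ₂) / S)) ^ 2 / 2 := this
        _ = N₁ * N₂ * (μ₁ - μ₂) ^ 2 / (2 * S) := by field_simp; ring
    rw [div_le_iff₀ hΔ2]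
    have hkey' : 2 * L * S ≤ N₁ * N₂ * (μ₁ - μ₂) ^ 2 := by
      rw [le_div_iff₀ (by positivity : (0:ℝ) < 2 * S)] at hkey
      linarith [hkey]
    have hK : 0 ≤ (Real.sqrt c₁ + Real.sqrt c₂) ^ 2 := by positivity
    have hAM : (Real.sqrt c₁ + Real.sqrt c₂) ^ 2 * (N₁ * N₂) ≤ (c₁ * N₁ + c₂ * N₂) * S := by
      have hAM' : (Real.sqrt c₁ + Real.sqrt c₂) ^ 2 * (N₁ * N₂) ≤
          (Real.sqrt c₁ ^ 2 * N₁ + Real.sqrt c₂ ^ 2 * N₂) * (N₁ + N₂) := by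
        nlinarith [sq_nonneg (Real.sqrt c₁ * N₁ - Real.sqrt c₂ * N₂)]
      rw [hs1, hs2] at hAM'
      exact hAM'
    have h3 : (Real.sqrt c₁ + Real.sqrt c₂) ^ 2 * (2 * L * S) ≤
        (Real.sqrt c₁ + Real.sqrt c₂) ^ 2 * (N₁ * N₂ * (μ₁ - μ₂) ^ 2) :=
      mul_le_mul_of_nonneg_left hkey' hK
    nlinarith [mul_le_mul_of_nonneg_right hAM hΔ2.le, h3, hS]
end

section
/- Let μ₁ > μ₂ be real numbers and c₁, c₂ > 0. Then sup_{w₁ ∈ [0,1]} inf_{λ₁ ≤ λ₂} [ (w₁/c₁)·(μ₁ − λ₁)²/2 + ((1−w₁)/c₂)·(μ₂ − λ₂)²/2 ] = (μ₁ − μ₂)² / (2(√c₁ + √c₂)²), and the supremum is attained at w₁ = √c₁/(√c₁ + √c₂). (Closed form of T*(μ)⁻¹ for a two-armed unit-variance Gaussian bandit, as in Corollary 2.) -/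
/-! Everything rests on the identity
`(A + B) (A x² + B y²) = A B (x - y)² + (A x + B y)²`.
Applied to `x = μ₁ - λ₁`, `y = μ₂ - λ₂` (so `x - y ≥ μ₁ - μ₂` on `λ₁ ≤ λ₂`), it shows that the
inner infimum equals `A B / (A + B) · (μ₁ - μ₂)² / 2`, attained where `A x + B y = 0`.
Applied to `x = √c₁`, `y = -√c₂` with `A = w / c₁`, `B = (1 - w) / c₂`, where `A x² + B y² = 1`,
it shows `A B / (A + B) ≤ 1 / (√c₁ + √c₂)²`, with equality when `w / √c₁ = (1 - w) / √c₂`. -/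

open Real

lemma mul_div_add_mul_sq_sub_le {A B : ℝ} (hA : 0 ≤ A) (hB : 0 ≤ B) (x y : ℝ) :
    A * B / (A + B) * (x - y) ^ 2 ≤ A * x ^ 2 + B * y ^ 2 := by
  rcases (add_nonneg hA hB).eq_or_lt with hAB | hAB
  · rw [← hAB, div_zero, zero_mul]
    positivity
  · rw [div_mul_eq_mul_div, div_le_iff₀ hAB]
    nlinarith [sq_nonneg (A * x + B * y)]

lemma mul_div_add_mul_sq_sub_eq {A B x y : ℝ} (hAB : A + B ≠ 0) (h : A * x + B * y = 0) :
    A * B / (A + B) * (x - y) ^ 2 = A * x ^ 2 + B * y ^ 2 := by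
  rw [div_mul_eq_mul_div, div_eq_iff hAB]
  linear_combination -(A * x + B * y) * h

lemma iInf_weighted_sq_dist_of_le {μ₁ μ₂ A B : ℝ} (hμ : μ₂ ≤ μ₁) (hA : 0 ≤ A) (hB : 0 ≤ B) :
    ⨅ lam : {p : ℝ × ℝ // p.1 ≤ p.2},
        (A * (μ₁ - lam.1.1) ^ 2 / 2 + B * (μ₂ - lam.1.2) ^ 2 / 2)
      = A * B / (A + B) * (μ₁ - μ₂) ^ 2 / 2 := by
  have : Nonempty {p : ℝ × ℝ // p.1 ≤ p.2} := ⟨⟨(0, 0), le_rfl⟩⟩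
  refine IsGLB.ciInf_eq (IsLeast.isGLB ⟨?_, ?_⟩)
  · set m := (A * μ₁ + B * μ₂) / (A + B)
    refine ⟨⟨(m, m), le_rfl⟩, ?_⟩
    rcases eq_or_ne (A + B) 0 with hAB | hAB
    · obtain rfl : A = 0 := by linarith
      obtain rfl : B = 0 := by linarith
      simp
    · have hm : A * (μ₁ - m) + B * (μ₂ - m) = 0 := by
        simp only [m]
        field_simp
        ring
      rw [← sub_sub_sub_cancel_right μ₁ μ₂ m, mul_div_add_mul_sq_sub_eq hAB hm]
      ring
  · rintro _ ⟨⟨⟨l₁, l₂⟩, hl⟩, rfl⟩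
    have hgap : (μ₁ - μ₂) ^ 2 ≤ ((μ₁ - l₁) - (μ₂ - l₂)) ^ 2 :=
      pow_le_pow_left₀ (sub_nonneg.2 hμ) (by linarith [show l₁ ≤ l₂ from hl]) 2
    calc A * B / (A + B) * (μ₁ - μ₂) ^ 2 / 2
        ≤ A * B / (A + B) * ((μ₁ - l₁) - (μ₂ - l₂)) ^ 2 / 2 := by
          gcongr
      _ ≤ (A * (μ₁ - l₁) ^ 2 + B * (μ₂ - l₂) ^ 2) / 2 := by
          gcongr
          exact mul_div_add_mul_sq_sub_le hA hB _ _
      _ = A * (μ₁ - l₁) ^ 2 / 2 + B * (μ₂ - l₂) ^ 2 / 2 := add_div _ _ _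

lemma sqrt_div_add_sqrt_mem_Icc {c₂ : ℝ} (hc₂ : 0 < c₂) (c₁ : ℝ) :
    √c₁ / (√c₁ + √c₂) ∈ Set.Icc (0 : ℝ) 1 := by
  have hb : 0 < √c₂ := sqrt_pos.2 hc₂
  exact ⟨by positivity, (div_le_one (by positivity)).2 (by linarith)⟩

section Weights

variable {c₁ c₂ : ℝ} (hc₁ : 0 < c₁) (hc₂ : 0 < c₂)
include hc₁ hc₂

lemma weighted_sq_sqrt_add_sq_sqrt (w : ℝ) :
    w / c₁ * √c₁ ^ 2 + (1 - w) / c₂ * (-√c₂) ^ 2 = 1 := by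
  rw [neg_sq, sq_sqrt hc₁.le, sq_sqrt hc₂.le]
  field_simp
  ring

lemma weighted_harmonic_le {w : ℝ} (hw₀ : 0 ≤ w) (hw₁ : w ≤ 1) :
    w / c₁ * ((1 - w) / c₂) / (w / c₁ + (1 - w) / c₂) ≤ 1 / (√c₁ + √c₂) ^ 2 := by
  have hA : 0 ≤ w / c₁ := div_nonneg hw₀ hc₁.le
  have hB : 0 ≤ (1 - w) / c₂ := div_nonneg (sub_nonneg.2 hw₁) hc₂.le
  have key := mul_div_add_mul_sq_sub_le hA hB √c₁ (-√c₂)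
  rw [sub_neg_eq_add, weighted_sq_sqrt_add_sq_sqrt hc₁ hc₂] at key
  have ha : 0 < √c₁ := sqrt_pos.2 hc₁
  rwa [le_div_iff₀ (by positivity)]

lemma weighted_harmonic_sqrt_div_add_sqrt :
    √c₁ / (√c₁ + √c₂) / c₁ * ((1 - √c₁ / (√c₁ + √c₂)) / c₂) /
        (√c₁ / (√c₁ + √c₂) / c₁ + (1 - √c₁ / (√c₁ + √c₂)) / c₂)
      = 1 / (√c₁ + √c₂) ^ 2 := by
  have ha : 0 < √c₁ := sqrt_pos.2 hc₁
  have hb : 0 < √c₂ := sqrt_pos.2 hc₂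
  have hAB : √c₁ / (√c₁ + √c₂) / c₁ + (1 - √c₁ / (√c₁ + √c₂)) / c₂ ≠ 0 :=
    (add_pos_of_pos_of_nonneg (by positivity)
      (div_nonneg (sub_nonneg.2 (sqrt_div_add_sqrt_mem_Icc hc₂ c₁).2) hc₂.le)).ne'
  have hbalance : √c₁ / (√c₁ + √c₂) / c₁ * √c₁ + (1 - √c₁ / (√c₁ + √c₂)) / c₂ * (-√c₂) = 0 := by
    field_simp
    linear_combination c₂ * sq_sqrt hc₁.le - c₁ * sq_sqrt hc₂.le
  have key := mul_div_add_mul_sq_sub_eq hAB hbalance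
  rw [sub_neg_eq_add, weighted_sq_sqrt_add_sq_sqrt hc₁ hc₂] at key
  rwa [eq_div_iff (by positivity)]

end Weights

/-- closed form of `T*(μ)⁻¹` for a two-armed unit-variance
Gaussian bandit (Corollary 2): the sup over `w₁ ∈ [0,1]` of the inf over
`λ₁ ≤ λ₂` of the cost-weighted transportation cost equals
`(μ₁−μ₂)²/(2(√c₁+√c₂)²)`, and the supremum is attained at
`w₁ = √c₁/(√c₁+√c₂)`. -/
theorem two_arm_Tstar_closed_form
    (μ₁ μ₂ c₁ c₂ : ℝ)
    (hμ : μ₂ < μ₁)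
    (hc₁ : 0 < c₁) (hc₂ : 0 < c₂) :
    IsGreatest
      {x : ℝ | ∃ w ∈ Set.Icc (0 : ℝ) 1,
        x = ⨅ lam : {p : ℝ × ℝ // p.1 ≤ p.2},
          ((w / c₁) * (μ₁ - lam.1.1) ^ 2 / 2 +
            ((1 - w) / c₂) * (μ₂ - lam.1.2) ^ 2 / 2)}
      ((μ₁ - μ₂) ^ 2 / (2 * (Real.sqrt c₁ + Real.sqrt c₂) ^ 2)) ∧
    (⨅ lam : {p : ℝ × ℝ // p.1 ≤ p.2},
        ((Real.sqrt c₁ / (Real.sqrt c₁ + Real.sqrt c₂)) / c₁ * (μ₁ - lam.1.1) ^ 2 / 2 +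
          ((1 - Real.sqrt c₁ / (Real.sqrt c₁ + Real.sqrt c₂)) / c₂) * (μ₂ - lam.1.2) ^ 2 / 2))
      = (μ₁ - μ₂) ^ 2 / (2 * (Real.sqrt c₁ + Real.sqrt c₂) ^ 2) := by
  have hw := sqrt_div_add_sqrt_mem_Icc hc₂ c₁
  have hclosed : 1 / (√c₁ + √c₂) ^ 2 * (μ₁ - μ₂) ^ 2 / 2
      = (μ₁ - μ₂) ^ 2 / (2 * (√c₁ + √c₂) ^ 2) := by
    rw [div_mul_eq_mul_div, one_mul, div_div, mul_comm]
  have hval := iInf_weighted_sq_dist_of_le hμ.le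
    (div_nonneg hw.1 hc₁.le) (div_nonneg (sub_nonneg.2 hw.2) hc₂.le)
  rw [weighted_harmonic_sqrt_div_add_sqrt hc₁ hc₂, hclosed] at hval
  refine ⟨⟨⟨_, hw, hval.symm⟩, ?_⟩, hval⟩
  rintro _ ⟨w, ⟨hw₀, hw₁⟩, rfl⟩
  rw [iInf_weighted_sq_dist_of_le hμ.le (div_nonneg hw₀ hc₁.le)
    (div_nonneg (sub_nonneg.2 hw₁) hc₂.le), ← hclosed]
  gcongr ?_ * _ / _
  exact weighted_harmonic_le hc₁ hc₂ hw₀ hw₁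
end

section
/- Let K ≥ 2, let μ : {1,…,K} → ℝ satisfy μ₁ > μ_a for all a ≠ 1, and let c : {1,…,K} → ℝ with c_a > 0 for all a. Let w ∈ Σ_K with w_a > 0 for all a, and set v_a = w_a/c_a. Then inf_{λ ∈ Alt(μ)} Σ_{a=1}^K (w_a/c_a)·(μ_a − λ_a)²/2 = min_{a ≠ 1} ( v₁·v_a/(v₁ + v_a) )·(μ₁ − μ_a)²/2. (Gaussian case of Proposition 8: the inner infimum in the lower bound is a minimum over suboptimal arms of a weighted Jensen–Shannon-type divergence.) -/
/-- Arithmetic core of the upper bound. -/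
lemma aux_upper (v0 va D ε t : ℝ) (hv0 : 0 < v0) (hva : 0 < va) (hD : 0 < D)
    (htpos : 0 < t) (ht1 : t ≤ 1)
    (hC : t * (va * (1 + 2 * (v0 * D / (v0 + va))) / 2) ≤ ε) :
    v0 * (va * D / (v0 + va)) ^ 2 / 2 + va * (v0 * D / (v0 + va) + t) ^ 2 / 2
      ≤ (v0 * va / (v0 + va)) * D ^ 2 / 2 + ε := by
  have hs : 0 < v0 + va := by linarith
  set q := v0 * D / (v0 + va) with hq
  have hq0 : 0 < q := by positivity
  have hid : v0 * (va * D / (v0 + va)) ^ 2 / 2 + va * q ^ 2 / 2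
      = (v0 * va / (v0 + va)) * D ^ 2 / 2 := by
    rw [hq]; field_simp; ring
  have htt : t * t ≤ 1 * t := mul_le_mul_of_nonneg_right ht1 htpos.le
  nlinarith [mul_pos hva htpos, mul_pos (mul_pos hva htpos) hq0]

/-- Arithmetic core of the lower bound. -/
lemma aux_lower (v0 va D x y : ℝ) (hv0 : 0 < v0) (hva : 0 < va) (hD : 0 < D)
    (hxy : D ≤ x - y) :
    (v0 * va / (v0 + va)) * D ^ 2 / 2 ≤ v0 * x ^ 2 / 2 + va * y ^ 2 / 2 := by
  have hs : 0 < v0 + va := by linarith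
  rw [div_mul_eq_mul_div, div_div, div_le_iff₀ (by positivity)]
  have h1 : D * D ≤ (x - y) * (x - y) :=
    mul_self_le_mul_self hD.le hxy
  nlinarith [sq_nonneg (v0 * x + va * y), mul_pos hv0 hva]

/-- Gaussian case of Proposition 8. Arm `0` plays the role of
arm 1 (the unique best arm). For a weight vector `w` in the simplex with
positive entries, the inner infimum over the alternative set equals the
minimum over suboptimal arms `a ≠ 0` of `(v₀ v_a/(v₀+v_a))·(μ₀−μ_a)²/2`
where `v_a = w_a/c_a`. -/
theorem inner_inf_eq_min_JS
    (K : ℕ) [NeZero K] (hK : 2 ≤ K)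
    (μ c w : Fin K → ℝ)
    (hμ : ∀ a, a ≠ 0 → μ a < μ 0)
    (hc : ∀ a, 0 < c a)
    (hw_pos : ∀ a, 0 < w a) (hw_sum : ∑ a, w a = 1) :
    (⨅ lam : {lam : Fin K → ℝ // ∃ a, a ≠ 0 ∧ lam 0 < lam a},
        ∑ a, (w a / c a) * (μ a - lam.1 a) ^ 2 / 2)
      = sInf {x : ℝ | ∃ a, a ≠ 0 ∧
          x = ((w 0 / c 0) * (w a / c a) / (w 0 / c 0 + w a / c a)) *
                (μ 0 - μ a) ^ 2 / 2} := by
  set v : Fin K → ℝ := fun a => w a / c a with hv_def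
  have hv : ∀ a, 0 < v a := fun a => div_pos (hw_pos a) (hc a)
  set S := {x : ℝ | ∃ a, a ≠ 0 ∧
      x = (v 0 * v a / (v 0 + v a)) * (μ 0 - μ a) ^ 2 / 2} with hS_def
  -- a canonical suboptimal arm
  have hK1 : 1 < K := by omega
  set a₀ : Fin K := ⟨1, hK1⟩ with ha₀_def
  have ha₀ : a₀ ≠ 0 := by
    refine Fin.ne_of_val_ne ?_
    simp [ha₀_def]
  have hSne : S.Nonempty := ⟨_, a₀, ha₀, rfl⟩
  have hSbdd : BddBelow S := by
    refine ⟨0, fun x hx => ?_⟩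
    obtain ⟨a, ha, rfl⟩ := hx
    have := hv 0; have := hv a
    positivity
  have hNe : Nonempty {lam : Fin K → ℝ // ∃ a, a ≠ 0 ∧ lam 0 < lam a} := by
    refine ⟨⟨fun b => (b : ℝ), a₀, ha₀, ?_⟩⟩
    simp [ha₀_def]
  have hRbdd : BddBelow (Set.range
      (fun lam : {lam : Fin K → ℝ // ∃ a, a ≠ 0 ∧ lam 0 < lam a} =>
        ∑ a, v a * (μ a - lam.1 a) ^ 2 / 2)) := by
    refine ⟨0, fun x hx => ?_⟩
    obtain ⟨lam, rfl⟩ := hx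
    refine Finset.sum_nonneg fun b _ => ?_
    have := hv b
    positivity
  refine le_antisymm ?_ ?_
  · -- inf ≤ sInf S : for each element of S, inf ≤ it
    refine le_csInf hSne ?_
    rintro x ⟨a, ha, rfl⟩
    refine le_of_forall_pos_le_add fun ε hε => ?_
    have hva := hv a
    have hv0 := hv 0
    have hs : 0 < v 0 + v a := by linarith
    set D : ℝ := μ 0 - μ a with hD_def
    have hD : 0 < D := by simpa [hD_def, sub_pos] using hμ a ha
    set m : ℝ := (v 0 * μ 0 + v a * μ a) / (v 0 + v a) with hm_def
    set q : ℝ := v 0 * D / (v 0 + v a) with hq_def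
    have hq0 : 0 < q := by positivity
    set C : ℝ := v a * (1 + 2 * q) / 2 with hC_def
    have hCpos : 0 < C := by positivity
    set t : ℝ := min 1 (ε / C) with ht_def
    have htpos : 0 < t := lt_min one_pos (div_pos hε hCpos)
    have ht1 : t ≤ 1 := min_le_left _ _
    have htC : t * C ≤ ε := by
      have : t ≤ ε / C := min_le_right _ _
      calc t * C ≤ (ε / C) * C := by nlinarith
        _ = ε := by field_simp
    set lam : Fin K → ℝ := Function.update (Function.update μ 0 m) a (m + t) with hlam_def
    have hlam0 : lam 0 = m := by
      rw [hlam_def, Function.update_of_ne (Ne.symm ha), Function.update_self]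
    have hlama : lam a = m + t := by
      rw [hlam_def, Function.update_self]
    have hlamb : ∀ b, b ≠ 0 → b ≠ a → lam b = μ b := fun b hb0 hba => by
      rw [hlam_def, Function.update_of_ne hba, Function.update_of_ne hb0]
    have hlam_mem : ∃ b, b ≠ 0 ∧ lam 0 < lam b := ⟨a, ha, by rw [hlam0, hlama]; linarith⟩
    have hsum : ∑ b, v b * (μ b - lam b) ^ 2 / 2
        = v 0 * (μ 0 - lam 0) ^ 2 / 2 + v a * (μ a - lam a) ^ 2 / 2 := by
      calc ∑ b, v b * (μ b - lam b) ^ 2 / 2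
          = ∑ b ∈ ({0, a} : Finset (Fin K)), v b * (μ b - lam b) ^ 2 / 2 := by
            refine (Finset.sum_subset (Finset.subset_univ _) fun b _ hb => ?_).symm
            simp only [Finset.mem_insert, Finset.mem_singleton, not_or] at hb
            rw [hlamb b hb.1 hb.2]
            simp
        _ = v 0 * (μ 0 - lam 0) ^ 2 / 2 + v a * (μ a - lam a) ^ 2 / 2 :=
            Finset.sum_pair (Ne.symm ha)
    have h0m : μ 0 - m = v a * D / (v 0 + v a) := by
      rw [hm_def, hD_def]; field_simp; ring
    have ham : μ a - lam a = -(q + t) := by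
      rw [hlama, hq_def, hm_def, hD_def]; field_simp; ring
    have key : v 0 * (μ 0 - lam 0) ^ 2 / 2 + v a * (μ a - lam a) ^ 2 / 2
        ≤ (v 0 * v a / (v 0 + v a)) * D ^ 2 / 2 + ε := by
      rw [hlam0, h0m, ham, neg_sq]
      exact aux_upper (v 0) (v a) D ε t hv0 hva hD htpos ht1
        (by rw [← hq_def, ← hC_def]; exact htC)
    calc (⨅ lam : {lam : Fin K → ℝ // ∃ a, a ≠ 0 ∧ lam 0 < lam a},
            ∑ b, v b * (μ b - lam.1 b) ^ 2 / 2)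
        ≤ ∑ b, v b * (μ b - lam b) ^ 2 / 2 := ciInf_le hRbdd ⟨lam, hlam_mem⟩
      _ ≤ (v 0 * v a / (v 0 + v a)) * D ^ 2 / 2 + ε := by rw [hsum]; exact key
  · -- sInf S ≤ inf
    refine le_ciInf fun lam => ?_
    obtain ⟨a, ha, hlt⟩ := lam.2
    have hva := hv a
    have hv0 := hv 0
    have hD : 0 < μ 0 - μ a := by simpa [sub_pos] using hμ a ha
    have hmem : (v 0 * v a / (v 0 + v a)) * (μ 0 - μ a) ^ 2 / 2 ∈ S := ⟨a, ha, rfl⟩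
    refine (csInf_le hSbdd hmem).trans ?_
    have hpair : v 0 * (μ 0 - lam.1 0) ^ 2 / 2 + v a * (μ a - lam.1 a) ^ 2 / 2
        ≤ ∑ b, v b * (μ b - lam.1 b) ^ 2 / 2 := by
      calc v 0 * (μ 0 - lam.1 0) ^ 2 / 2 + v a * (μ a - lam.1 a) ^ 2 / 2
          = ∑ b ∈ ({0, a} : Finset (Fin K)), v b * (μ b - lam.1 b) ^ 2 / 2 :=
            (Finset.sum_pair (f := fun b => v b * (μ b - lam.1 b) ^ 2 / 2)
              (Ne.symm ha)).symm
        _ ≤ ∑ b, v b * (μ b - lam.1 b) ^ 2 / 2 := by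
            refine Finset.sum_le_sum_of_subset_of_nonneg (Finset.subset_univ _) fun b _ _ => ?_
            have := hv b
            positivity
    refine le_trans ?_ hpair
    exact aux_lower (v 0) (v a) (μ 0 - μ a) (μ 0 - lam.1 0) (μ a - lam.1 a)
      hv0 hva hD (by linarith)
end

section
/- Let K ≥ 2, let μ : {1,…,K} → ℝ satisfy μ₁ > μ₂ ≥ ⋯ ≥ μ_K, and let c : {1,…,K} → ℝ with c_a > 0 for all a. Set Δ_a = μ₁ − μ_a for a ≥ 2, and for y ∈ [0, Δ₂²/2) define x_a(y) = 2y/(Δ_a² − 2y), m_a(y) = (μ₁ + x_a(y)·μ_a)/(1 + x_a(y)), and F(y) = Σ_{a=2}^K (c_a/c₁) · (μ₁ − m_a(y))² / (μ_a − m_a(y))² for y ∈ (0, Δ₂²/2), with F(0) = 0. Then F is continuous and strictly increasing on [0, Δ₂²/2), F(y) → ∞ as y → Δ₂²/2, and consequently there is a unique y* ∈ (0, Δ₂²/2) with F(y*) = 1. (Gaussian specialization of the function F_{μ,c} in Theorem 10 used to compute the optimal cost proportions.) -/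
/-! The summand of `F` for arm `a` is exactly `x_a(y)²`: the weighted mean `m_a(y)` splits the
segment from `μ_a` to `μ₀` in the ratio `1 : x_a(y)`. So on `[0, Δ₁²/2)` the function `F` is a
positive combination of squares of the nonnegative increasing functions `x_a(y) = 2y/(Δ_a² − 2y)`,
all continuous there since `Δ₁ ≤ Δ_a`, and `x₁` blows up at `Δ₁²/2`. As `F 0 = 0`, the
intermediate value theorem and strict monotonicity give the unique root of `F = 1`. -/

open Filter Set Topology

lemma sq_sub_weightedMean_div_sq_sub_weightedMean {u v x : ℝ} (huv : u ≠ v) (hx : 1 + x ≠ 0) :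
    (u - (u + x * v) / (1 + x)) ^ 2 / (v - (u + x * v) / (1 + x)) ^ 2 = x ^ 2 := by
  have hu : u - (u + x * v) / (1 + x) = x * (u - v) / (1 + x) := by field_simp; ring
  have hv : v - (u + x * v) / (1 + x) = -(u - v) / (1 + x) := by field_simp; ring
  have : u - v ≠ 0 := sub_ne_zero.2 huv
  rw [hu, hv]
  field_simp

lemma continuousOn_two_mul_div_sub (D : ℝ) :
    ContinuousOn (fun y => 2 * y / (D - 2 * y)) (Iio (D / 2)) :=
  ContinuousOn.div (by fun_prop) (by fun_prop) fun y (hy : y < D / 2) => by linarith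

lemma strictMonoOn_two_mul_div_sub {D : ℝ} (hD : 0 < D) :
    StrictMonoOn (fun y => 2 * y / (D - 2 * y)) (Iio (D / 2)) := by
  intro y₁ (hy₁ : y₁ < D / 2) y₂ (hy₂ : y₂ < D / 2) hy
  rw [div_lt_div_iff₀ (by linarith) (by linarith)]
  nlinarith

lemma tendsto_two_mul_div_sub_atTop {D : ℝ} (hD : 0 < D) :
    Tendsto (fun y => 2 * y / (D - 2 * y)) (𝓝[<] (D / 2)) atTop := by
  have hden : Tendsto (fun y => D - 2 * y) (𝓝[<] (D / 2)) (𝓝[>] 0) := by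
    refine tendsto_nhdsWithin_of_tendsto_nhds_of_eventually_within _ ?_ ?_
    · exact ((by fun_prop : Continuous fun y : ℝ => D - 2 * y).tendsto' _ 0 (by ring)).mono_left
        nhdsWithin_le_nhds
    · filter_upwards [self_mem_nhdsWithin] with y (hy : y < D / 2)
      exact show 0 < D - 2 * y by linarith
  have hnum : Tendsto (fun y : ℝ => 2 * y) (𝓝[<] (D / 2)) (𝓝 D) :=
    ((by fun_prop : Continuous fun y : ℝ => 2 * y).tendsto' _ D (by ring)).mono_left
      nhdsWithin_le_nhds
  exact hnum.pos_mul_atTop hD hden.inv_tendsto_nhdsGT_zero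

lemma strictMonoOn_two_mul_div_sub_sq {D : ℝ} (hD : 0 < D) :
    StrictMonoOn (fun y => (2 * y / (D - 2 * y)) ^ 2) (Ico 0 (D / 2)) := fun y hy z hz hyz =>
  pow_lt_pow_left₀ (strictMonoOn_two_mul_div_sub hD hy.2 hz.2 hyz)
    (div_nonneg (by linarith [hy.1]) (by linarith [hy.2])) two_ne_zero

lemma Finset.strictMonoOn_sum {ι α β : Type*} [Preorder α] [AddCommMonoid β] [PartialOrder β]
    [IsOrderedCancelAddMonoid β] {s : Finset ι} {f : ι → α → β} {S : Set α} (hs : s.Nonempty)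
    (hf : ∀ i ∈ s, StrictMonoOn (f i) S) : StrictMonoOn (fun x => ∑ i ∈ s, f i x) S :=
  fun _ hx _ hy hxy => Finset.sum_lt_sum_of_nonempty hs fun i hi => hf i hi hx hy hxy

lemma Finset.tendsto_sum_atTop_of_mem {ι α : Type*} {l : Filter α} {s : Finset ι}
    {f : ι → α → ℝ} {i : ι} (hi : i ∈ s) (hfi : Tendsto (f i) l atTop)
    (hf : ∀ j ∈ s, ∀ x, 0 ≤ f j x) : Tendsto (fun x => ∑ j ∈ s, f j x) l atTop :=
  tendsto_atTop_mono (fun x => Finset.single_le_sum (fun j hj => hf j hj x) hi) hfi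

lemma existsUnique_mem_Ioo_eq_of_tendsto_atTop {f : ℝ → ℝ} {a b t : ℝ} (hab : a < b)
    (hcont : ContinuousOn f (Ico a b)) (hmono : StrictMonoOn f (Ico a b)) (ht : f a < t)
    (hb : Tendsto f (𝓝[<] b) atTop) : ∃! y, y ∈ Ioo a b ∧ f y = t := by
  obtain ⟨z, hzt, hz⟩ := ((hb.eventually_gt_atTop t).and (Ioo_mem_nhdsLT hab)).exists
  obtain ⟨y, hy, hyt⟩ := intermediate_value_Ioo hz.1.le
    (hcont.mono (Icc_subset_Ico_right hz.2)) ⟨ht, hzt⟩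
  refine ⟨y, ⟨⟨hy.1, hy.2.trans hz.2⟩, hyt⟩, fun w ⟨hw, hwt⟩ => ?_⟩
  exact hmono.injOn (Ioo_subset_Ico_self hw) ⟨hy.1.le, hy.2.trans hz.2⟩ (hwt.trans hyt.symm)

section WeightedSum

variable {ι : Type*} {s : Finset ι} {w D : ι → ℝ} {i₀ : ι}

lemma continuousOn_sum_mul_two_mul_div_sub_sq (hD : ∀ i ∈ s, D i₀ ≤ D i) :
    ContinuousOn (fun y => ∑ i ∈ s, w i * (2 * y / (D i - 2 * y)) ^ 2) (Iio (D i₀ / 2)) :=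
  continuousOn_finsetSum s fun i hi => continuousOn_const.mul
    (((continuousOn_two_mul_div_sub _).mono (Iio_subset_Iio (by linarith [hD i hi]))).pow 2)

lemma strictMonoOn_sum_mul_two_mul_div_sub_sq (hi₀ : i₀ ∈ s) (hw : ∀ i ∈ s, 0 < w i)
    (hD₀ : 0 < D i₀) (hD : ∀ i ∈ s, D i₀ ≤ D i) :
    StrictMonoOn (fun y => ∑ i ∈ s, w i * (2 * y / (D i - 2 * y)) ^ 2) (Ico 0 (D i₀ / 2)) := by
  refine Finset.strictMonoOn_sum ⟨i₀, hi₀⟩ fun i hi => ?_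
  have hIco : Ico 0 (D i₀ / 2) ⊆ Ico 0 (D i / 2) := Ico_subset_Ico_right (by linarith [hD i hi])
  exact fun y hy z hz hyz => mul_lt_mul_of_pos_left
    (strictMonoOn_two_mul_div_sub_sq (hD₀.trans_le (hD i hi)) (hIco hy) (hIco hz) hyz) (hw i hi)

lemma tendsto_sum_mul_two_mul_div_sub_sq_atTop (hi₀ : i₀ ∈ s) (hw : ∀ i ∈ s, 0 < w i)
    (hD₀ : 0 < D i₀) :
    Tendsto (fun y => ∑ i ∈ s, w i * (2 * y / (D i - 2 * y)) ^ 2) (𝓝[<] (D i₀ / 2)) atTop :=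
  Finset.tendsto_sum_atTop_of_mem hi₀
    (((tendsto_pow_atTop two_ne_zero).comp (tendsto_two_mul_div_sub_atTop hD₀)).const_mul_atTop
      (hw i₀ hi₀))
    fun i hi _ => mul_nonneg (hw i hi).le (sq_nonneg _)

end WeightedSum

/-- Gaussian specialization of the function `F_{μ,c}` of
Theorem 10. Arm `0` plays the role of arm 1 (the best arm) and arm `1`
the role of arm 2. With `Δ_a = μ₀ − μ_a`, `x_a(y) = 2y/(Δ_a² − 2y)`,
`m_a(y) = (μ₀ + x_a(y)μ_a)/(1 + x_a(y))` and
`F(y) = Σ_{a≠0} (c_a/c₀)·(μ₀ − m_a(y))²/(μ_a − m_a(y))²`, the function `F`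
is continuous and strictly increasing on `[0, Δ₁²/2)`, tends to `∞` at the
right endpoint, and there is a unique `y* ∈ (0, Δ₁²/2)` with `F(y*) = 1`. -/
theorem F_monotone_unique_root
    (K : ℕ) [NeZero K] (hK : 2 ≤ K)
    (μ c : Fin K → ℝ)
    (hc : ∀ a, 0 < c a)
    (h12 : μ 1 < μ 0)
    (hmono : ∀ a b : Fin K, 1 ≤ a → a ≤ b → μ b ≤ μ a) :
    let Δ : Fin K → ℝ := fun a => μ 0 - μ a
    let x : Fin K → ℝ → ℝ := fun a y => 2 * y / ((Δ a) ^ 2 - 2 * y)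
    let m : Fin K → ℝ → ℝ := fun a y => (μ 0 + x a y * μ a) / (1 + x a y)
    let F : ℝ → ℝ := fun y =>
      ∑ a ∈ Finset.univ.erase 0, (c a / c 0) * (μ 0 - m a y) ^ 2 / (μ a - m a y) ^ 2
    ContinuousOn F (Set.Ico 0 ((Δ 1) ^ 2 / 2)) ∧
    StrictMonoOn F (Set.Ico 0 ((Δ 1) ^ 2 / 2)) ∧
    Tendsto F (nhdsWithin ((Δ 1) ^ 2 / 2) (Set.Ico 0 ((Δ 1) ^ 2 / 2))) atTop ∧
    ∃! y : ℝ, y ∈ Set.Ioo 0 ((Δ 1) ^ 2 / 2) ∧ F y = 1 := by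
  intro Δ x m F
  set s := Finset.univ.erase (0 : Fin K)
  have h1s : (1 : Fin K) ∈ s := Finset.mem_erase.2
    ⟨by simp [Fin.ext_iff, Nat.mod_eq_of_lt hK], Finset.mem_univ _⟩
  have hΔ1 : 0 < Δ 1 := sub_pos.2 h12
  have hΔ : ∀ a ∈ s, Δ 1 ≤ Δ a := fun a ha =>
    sub_le_sub_left (hmono 1 a le_rfl (Fin.one_le_of_ne_zero (Finset.ne_of_mem_erase ha))) _
  have hΔsq : ∀ a ∈ s, Δ 1 ^ 2 ≤ Δ a ^ 2 := fun a ha => pow_le_pow_left₀ hΔ1.le (hΔ a ha) 2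
  have hw : ∀ a ∈ s, 0 < c a / c 0 := fun a _ => div_pos (hc a) (hc 0)
  have hFG : EqOn F (fun y => ∑ a ∈ s, c a / c 0 * x a y ^ 2) (Ico 0 (Δ 1 ^ 2 / 2)) :=
    fun y ⟨hy₀, hy⟩ => Finset.sum_congr rfl fun a ha => by
      have hx : 0 ≤ x a y := div_nonneg (by linarith) (by linarith [hΔsq a ha])
      have hμ : μ 0 ≠ μ a := (sub_pos.1 (hΔ1.trans_le (hΔ a ha))).ne'
      rw [mul_div_assoc, sq_sub_weightedMean_div_sq_sub_weightedMean hμ (by positivity)]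
  have hL : 0 < Δ 1 ^ 2 / 2 := by positivity
  have hcont : ContinuousOn F (Ico 0 (Δ 1 ^ 2 / 2)) :=
    ((continuousOn_sum_mul_two_mul_div_sub_sq (w := fun a => c a / c 0) (D := fun a => Δ a ^ 2)
      hΔsq).mono Ico_subset_Iio_self).congr hFG
  have hsmono : StrictMonoOn F (Ico 0 (Δ 1 ^ 2 / 2)) :=
    (strictMonoOn_sum_mul_two_mul_div_sub_sq (D := fun a => Δ a ^ 2) h1s hw (pow_pos hΔ1 2)
      hΔsq).congr hFG.symm
  have htop : Tendsto F (𝓝[<] (Δ 1 ^ 2 / 2)) atTop :=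
    (tendsto_sum_mul_two_mul_div_sub_sq_atTop (D := fun a => Δ a ^ 2) h1s hw
      (pow_pos hΔ1 2)).congr' (eventuallyEq_of_mem (Ico_mem_nhdsLT hL) hFG.symm)
  rw [nhdsWithin_Ico_eq_nhdsLT hL]
  refine ⟨hcont, hsmono, htop, existsUnique_mem_Ioo_eq_of_tendsto_atTop hL hcont hsmono ?_ htop⟩
  simp [F, m, x]
end

section
/- Let K ≥ 1 and let (a_t)_{t≥0} be a sequence of arm pulls with a_t ∈ {1,…,K}, and for each arm b and time t let N_b(t) = Σ_{s<t} 1{a_s = b} be the number of pulls of arm b before time t. Assume each arm is pulled once during the first K rounds (a_s = s+1 for 0 ≤ s < K), and that for every t ≥ K, if the forced-exploration set U_t = {b : N_b(t) < √t} is nonempty then a_t ∈ argmin_b N_b(t). Then there exists t₀ such that for all t ≥ t₀ and every arm b, N_b(t) ≥ √t − 1. (Deterministic content of Lemma 15: the forced exploration rule of the CTAS sampling rule guarantees every arm is pulled at least √t − 1 times.) -/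
/-- Auxiliary time sequence: `tauSeq K T0 i` is a time by which every arm
has been pulled at least `i + 1` times. -/
def tauSeq (K T0 : ℕ) : ℕ → ℕ
  | 0 => T0
  | (i+1) => max (tauSeq K T0 i + K) ((i+2)^2+1)

/-- deterministic content of Lemma 15: the forced exploration
rule of CTAS guarantees every arm is pulled at least `√t − 1` times
eventually. Arms are indexed by `Fin K` (arm `s+1` of the paper is index
`s`). `N b t` counts the pulls of arm `b` before time `t`; each arm is
pulled once during the first `K` rounds, and at every time `t ≥ K`, if some
arm has been pulled fewer than `√t` times then a least-pulled arm is
pulled. -/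
theorem forced_exploration_sqrt
    (K : ℕ) (hK : 1 ≤ K)
    (a : ℕ → Fin K) :
    let N : Fin K → ℕ → ℕ := fun b t => ((Finset.range t).filter fun s => a s = b).card
    (∀ s : ℕ, (hs : s < K) → a s = ⟨s, hs⟩) →
    (∀ t : ℕ, K ≤ t → (∃ b : Fin K, (N b t : ℝ) < Real.sqrt t) →
      ∀ b : Fin K, N (a t) t ≤ N b t) →
    ∃ t₀ : ℕ, ∀ t : ℕ, t₀ ≤ t → ∀ b : Fin K, Real.sqrt t - 1 ≤ (N b t : ℝ) := by
  intro N hinit hforce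
  -- one-step evolution of the counts
  have hstep : ∀ t b, N b (t+1) = if a t = b then N b t + 1 else N b t := by
    intro t b
    simp only [N, Finset.range_add_one, Finset.filter_insert]
    split_ifs with h
    · rw [Finset.card_insert_of_notMem (by simp)]
    · rfl
  -- monotonicity of counts in time
  have hmono : ∀ b, ∀ s t : ℕ, s ≤ t → N b s ≤ N b t := by
    intro b s t hst
    exact Finset.card_le_card
      (Finset.filter_subset_filter _ (Finset.range_subset_range.mpr hst))
  -- every arm pulled once during the first K rounds
  have hK1 : ∀ b : Fin K, 1 ≤ N b K := by
    intro b
    refine Finset.card_pos.mpr ⟨b.val, ?_⟩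
    simp only [Finset.mem_filter, Finset.mem_range]
    exact ⟨b.isLt, by rw [hinit b.val b.isLt]⟩
  -- the climbing lemma: if all arms are at least n and some arm has value ≤ n
  -- forced exploration raises all arms to at least n+1 within j steps, where
  -- j bounds the number of arms of value ≤ n.
  have climb : ∀ j n t, K ≤ t → n^2 < t → (∀ b, n ≤ N b t) →
      (Finset.univ.filter fun b => N b t ≤ n).card ≤ j →
      ∀ b, n + 1 ≤ N b (t + j) := by
    intro j
    induction j with
    | zero =>
      intro n t _ _ hlb hcard b
      have hemp : (Finset.univ.filter fun b => N b t ≤ n) = ∅ :=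
        Finset.card_eq_zero.mp (Nat.le_antisymm hcard (Nat.zero_le _))
      have hb : ¬ (N b t ≤ n) := by
        intro h
        have : b ∈ (Finset.univ.filter fun b => N b t ≤ n) := by
          simp [Finset.mem_filter, h]
        rw [hemp] at this
        exact absurd this (Finset.notMem_empty b)
      have : N b (t + 0) = N b t := by simp
      omega
    | succ j ih =>
      intro n t ht hn hlb hcard
      by_cases hem : ∃ b₀, N b₀ t ≤ n
      · obtain ⟨b₀, hb₀⟩ := hem
        have hb₀' : N b₀ t = n := le_antisymm hb₀ (hlb b₀)
        -- the forced exploration condition holds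
        have hsq : ((N b₀ t : ℝ)) < Real.sqrt t := by
          rw [Real.lt_sqrt (by positivity)]
          have h1 : (N b₀ t)^2 < t := by rw [hb₀']; exact hn
          exact_mod_cast h1
        have hforce' := hforce t ht ⟨b₀, hsq⟩
        have hat : N (a t) t = n := le_antisymm ((hforce' b₀).trans hb₀) (hlb (a t))
        have hat1 : N (a t) (t+1) = n + 1 := by rw [hstep]; simp [hat]
        have hlb1 : ∀ b, n ≤ N b (t+1) := fun b =>
          (hlb b).trans (hmono b t (t+1) (Nat.le_succ t))
        have hmem : a t ∈ (Finset.univ.filter fun b => N b t ≤ n) := by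
          simp [Finset.mem_filter, hat]
        have hsub : (Finset.univ.filter fun b => N b (t+1) ≤ n) ⊆
            ((Finset.univ.filter fun b => N b t ≤ n).erase (a t)) := by
          intro b hb
          simp only [Finset.mem_filter, Finset.mem_univ, true_and] at hb
          refine Finset.mem_erase.mpr ⟨?_, ?_⟩
          · intro hba
            rw [hba] at hb
            omega
          · simp only [Finset.mem_filter, Finset.mem_univ, true_and]
            exact (hmono b t (t+1) (Nat.le_succ t)).trans hb
        have hcard1 : (Finset.univ.filter fun b => N b (t+1) ≤ n).card ≤ j := by
          have h1 := Finset.card_le_card hsub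
          rw [Finset.card_erase_of_mem hmem] at h1
          omega
        have hres := ih n (t+1) (by omega) (by omega) hlb1 hcard1
        intro b
        have : t + (j+1) = t + 1 + j := by omega
        rw [this]
        exact hres b
      · push_neg at hem
        intro b
        exact (hem b).trans_le (hmono b t (t + (j+1)) (by omega))
  set T0 : ℕ := max K 2 with hT0
  set τ : ℕ → ℕ := tauSeq K T0 with hτ
  have hτ0 : τ 0 = T0 := rfl
  have hτs : ∀ i, τ (i+1) = max (τ i + K) ((i+2)^2+1) := fun i => rfl
  -- main invariant
  have inv : ∀ i, K ≤ τ i ∧ (i+1)^2 < τ i ∧ ∀ b, i + 1 ≤ N b (τ i) := by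
    intro i
    induction i with
    | zero =>
      refine ⟨le_max_left _ _, by simp [hτ0, hT0], ?_⟩
      intro b
      exact (hK1 b).trans (hmono b K (τ 0) (le_max_left _ _))
    | succ i ih =>
      obtain ⟨h1, h2, h3⟩ := ih
      have hcard : (Finset.univ.filter fun b => N b (τ i) ≤ i+1).card ≤ K := by
        calc (Finset.univ.filter fun b => N b (τ i) ≤ i+1).card
            ≤ Finset.univ.card := Finset.card_filter_le _ _
          _ = K := by simp
      have hc := climb K (i+1) (τ i) h1 h2 h3 hcard
      have hle : τ i + K ≤ τ (i+1) := by rw [hτs]; exact le_max_left _ _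
      refine ⟨by omega, ?_, ?_⟩
      · rw [hτs, show i+1+1 = i+2 from rfl]
        have := le_max_right (τ i + K) ((i+2)^2+1)
        omega
      · intro b
        exact (hc b).trans (hmono b (τ i + K) (τ (i+1)) hle)
  -- descent: the sequence τ eventually catches the value (i+1)^2 + 1
  have desc : ∀ d i, K ≤ i → τ i ≤ (i+1)^2 + 1 + d → τ (i+d) ≤ (i+d+1)^2 + 1 := by
    intro d
    induction d with
    | zero => intro i _ h; exact h
    | succ d ih =>
      intro i hKi h
      have hstep1 : τ (i+1) ≤ (i+2)^2 + 1 + d := by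
        rw [hτs]
        have h1 : τ i + K ≤ (i+2)^2 + 1 + d := by nlinarith
        have h2 : (i+2)^2 + 1 ≤ (i+2)^2 + 1 + d := by omega
        omega
      have := ih (i+1) (by omega) hstep1
      have heq : i + (d+1) = (i+1) + d := by omega
      rw [heq]
      have heq2 : i + 1 + d + 1 = i + (d+1) + 1 := by omega
      rw [heq2, heq] at this
      exact this
  have hfix0 : τ (K + τ K) ≤ (K + τ K + 1)^2 + 1 := by
    have := desc (τ K) K le_rfl (by omega)
    exact this
  set i₁ : ℕ := K + τ K with hi₁
  -- from i₁ on, τ i = (i+1)^2 + 1 exactly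
  have hfix : ∀ j, i₁ ≤ j → τ j = (j+1)^2 + 1 := by
    intro j hj
    induction j with
    | zero =>
      have := (inv 0).2.1
      omega
    | succ j ih =>
      rcases Nat.lt_or_ge j i₁ with hlt | hge
      · -- then j + 1 = i₁
        have : j + 1 = i₁ := by omega
        rw [this]
        have h2 := (inv i₁).2.1
        omega
      · have hj' := ih hge
        rw [hτs, hj', show j+1+1 = j+2 from rfl]
        have hK2 : K ≤ j := by omega
        have hle : (j+1)^2 + 1 + K ≤ (j+2)^2 + 1 := by nlinarith
        rw [max_eq_right hle]
  -- conclusion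
  refine ⟨(i₁+1)^2 + 2, ?_⟩
  intro t ht b
  set n : ℕ := Nat.sqrt (t-1) with hn
  have hn2 : n * n ≤ t - 1 := Nat.sqrt_le (t-1)
  have hn2' : t - 1 < (n+1) * (n+1) := Nat.lt_succ_sqrt (t-1)
  have hge : i₁ + 1 ≤ n := by
    rw [hn]
    rw [Nat.le_sqrt]
    calc (i₁+1) * (i₁+1) = (i₁+1)^2 := (pow_two _).symm
      _ ≤ t - 1 := by omega
  have hτn : τ (n-1) = n^2 + 1 := by
    have h := hfix (n-1) (by omega)
    have : n - 1 + 1 = n := by omega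
    rw [this] at h
    exact h
  have hNlb : n ≤ N b t := by
    have h1 := (inv (n-1)).2.2 b
    have h2 : n - 1 + 1 = n := by omega
    rw [h2] at h1
    have h3 : τ (n-1) ≤ t := by
      rw [hτn]
      have : n^2 = n * n := pow_two n
      omega
    exact h1.trans (hmono b (τ (n-1)) t h3)
  -- now the real-number conclusion
  have htle : (t : ℝ) ≤ ((n+1 : ℕ) : ℝ)^2 := by
    have h4 : t ≤ (n+1)^2 := by
      have : (n+1)^2 = (n+1) * (n+1) := pow_two (n+1)
      omega
    exact_mod_cast h4
  have hsqrt : Real.sqrt t ≤ ((n+1 : ℕ) : ℝ) := by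
    rw [show ((n+1 : ℕ) : ℝ) = Real.sqrt (((n+1 : ℕ) : ℝ)^2) from
      (Real.sqrt_sq (by positivity)).symm]
    exact Real.sqrt_le_sqrt htle
  have hcast : ((n : ℕ) : ℝ) ≤ (N b t : ℝ) := by exact_mod_cast hNlb
  push_cast at hsqrt
  linarith
end

section
/- Let K ≥ 2 and ℓ ∈ (0,1]. Consider a sequence of arm pulls (a_t)_{t≥1} with a_t ∈ {1,…,K} and per-round costs C_t ∈ [ℓ,1]; let N_a(t) = Σ_{s≤t}1{a_s=a}, let ĉ_a(t) = (1/N_a(t))·Σ_{s≤t} C_s·1{a_s=a} be the empirical mean cost of arm a (arms are each pulled once in the first K rounds so N_a(t) ≥ 1 for t ≥ K), and let J(t) = Σ_{s≤t} C_s = Σ_a ĉ_a(t)N_a(t) be the cumulative cost. Let (ŵ*(t))_{t≥K} be a sequence in the simplex Σ_K and w* ∈ Σ_K, and suppose the sampling rule satisfies: for every t ≥ K, if U_t = {a : N_a(t) < √t} ≠ ∅ then a_{t+1} ∈ argmin_a N_a(t), and otherwise a_{t+1} ∈ argmax_a ( J(t)·ŵ*_a(t) − ĉ_a(t)·N_a(t)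 ). If ŵ*_a(t) → w*_a as t → ∞ for every a, then for every arm a, ĉ_a(t)·N_a(t)/J(t) → w*_a as t → ∞. (Deterministic content of Theorem 6: under the CTAS sampling rule, the empirical proportion of cumulative cost spent on each arm converges to the optimal proportion whenever the plug-in proportions converge.) -/
/-!
Write `S_b(t)` for the cost spent on arm `b` during the first `t` rounds, so that `J(t) = ∑_b S_b(t)`.
When arm `b` is pulled at round `t + 1`, either the pull was forced, and then
`S_b(t) ≤ N_b(t) < √t = o(J(t))`, or `b` maximised the deficit `J(t) ŵ*_a(t) − S_a(t)`, whose sum over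
the arms is `0`, so that `S_b(t) ≤ J(t) ŵ*_b(t)`. A pull raises `S_b` by at most `1`, hence `S_b` can
never climb above the increasing, unbounded barrier `J(t) (w*_b + ε)` once `ŵ*_b(t)` is close to `w*_b`,
and it falls below it eventually. Since the proportions `S_b(t) / J(t)` and `w*_b` both sum to `1`,
these upper bounds for all arms give the matching lower bounds.
-/

open Filter Finset Topology

lemma eventually_le_of_eventually_le_max {β : Type*} [LinearOrder β] {f g : ℕ → β}
    (hg : Monotone g) (hg_top : Tendsto g atTop atTop)
    (hstep : ∀ᶠ t in atTop, f (t + 1) ≤ max (f t) (g (t + 1))) :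
    ∀ᶠ t in atTop, f t ≤ g t := by
  obtain ⟨T, hT⟩ := eventually_atTop.1 hstep
  have hbound : ∀ t, T ≤ t → f t ≤ max (f T) (g t) := by
    intro t ht
    induction t, ht using Nat.le_induction with
    | base => exact le_max_left _ _
    | succ t ht ih =>
      calc f (t + 1) ≤ max (f t) (g (t + 1)) := hT t ht
        _ ≤ max (max (f T) (g t)) (g (t + 1)) := max_le_max_right _ ih
        _ = max (f T) (g (t + 1)) := by rw [max_assoc, max_eq_right (hg t.le_succ)]
  filter_upwards [eventually_ge_atTop T, hg_top.eventually_ge_atTop (f T)] with t ht hfT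
  exact (hbound t ht).trans (max_le hfT le_rfl)

lemma eventually_sqrt_add_one_le_mul {c : ℝ} (hc : 0 < c) :
    ∀ᶠ t : ℕ in atTop, √(t : ℝ) + 1 ≤ c * t := by
  filter_upwards [(Real.tendsto_sqrt_atTop.comp tendsto_natCast_atTop_atTop).eventually_ge_atTop
    (max 1 (2 / c))] with t ht
  have hone : 1 ≤ √(t : ℝ) := le_of_max_le_left ht
  have htwo : 2 ≤ c * √(t : ℝ) := (div_le_iff₀' hc).1 (le_of_max_le_right ht)
  calc √(t : ℝ) + 1 ≤ c * √(t : ℝ) * √(t : ℝ) := by nlinarith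
    _ = c * t := by rw [mul_assoc, Real.mul_self_sqrt (Nat.cast_nonneg t)]

lemma tendsto_of_sum_eq_of_eventually_le {α ι : Type*} [Fintype ι] {l : Filter α}
    {p : α → ι → ℝ} {q : ι → ℝ} (hsum : ∀ᶠ x in l, ∑ i, p x i = ∑ i, q i)
    (hle : ∀ ε > 0, ∀ i, ∀ᶠ x in l, p x i ≤ q i + ε) (i : ι) :
    Tendsto (p · i) l (𝓝 (q i)) := by
  rw [Metric.tendsto_nhds]
  intro ε hε
  set n : ℝ := (Fintype.card ι : ℝ)
  have hn : 1 ≤ n := Nat.one_le_cast.2 (Fintype.card_pos_iff.2 ⟨i⟩)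
  set δ := ε / (n + 1)
  have hδ : 0 < δ := by positivity
  have hnδ : n * δ < ε := by
    rw [mul_div_assoc', div_lt_iff₀ (by positivity)]
    linarith
  filter_upwards [hsum, eventually_all.2 (hle δ hδ)] with x hx hpx
  have hslack : q i + δ - p x i ≤ ∑ j, (q j + δ - p x j) :=
    single_le_sum (f := fun j => q j + δ - p x j) (fun j _ => by linarith [hpx j]) (mem_univ i)
  have htotal : ∑ j, (q j + δ - p x j) = n * δ := by
    rw [sum_sub_distrib, sum_add_distrib, hx]
    simp [n]
  rw [Real.dist_eq, abs_lt]
  constructor <;> nlinarith [hpx i]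

namespace CostBandit

variable {ι : Type*} [DecidableEq ι]

def pullCount (pull : ℕ → ι) (b : ι) (t : ℕ) : ℕ :=
  ((Icc 1 t).filter fun s => pull s = b).card

noncomputable def armCost (pull : ℕ → ι) (C : ℕ → ℝ) (b : ι) (t : ℕ) : ℝ :=
  ∑ s ∈ (Icc 1 t).filter fun s => pull s = b, C s

noncomputable def totalCost (C : ℕ → ℝ) (t : ℕ) : ℝ :=
  ∑ s ∈ Icc 1 t, C s

def FollowsCTAS (pull : ℕ → ι) (C : ℕ → ℝ) (what : ℕ → ι → ℝ) (t₀ : ℕ) : Prop :=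
  ∀ t, t₀ ≤ t →
    ((∃ b, (pullCount pull b t : ℝ) < √t) →
      ∀ b, pullCount pull (pull (t + 1)) t ≤ pullCount pull b t) ∧
    ((¬ ∃ b, (pullCount pull b t : ℝ) < √t) →
      ∀ b, totalCost C t * what t b - armCost pull C b t ≤
        totalCost C t * what t (pull (t + 1)) - armCost pull C (pull (t + 1)) t)

variable (pull : ℕ → ι) {C : ℕ → ℝ} {ℓ : ℝ}

lemma totalCost_succ (C : ℕ → ℝ) (t : ℕ) : totalCost C (t + 1) = totalCost C t + C (t + 1) :=
  sum_Icc_succ_top (by omega) C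

lemma armCost_succ (b : ι) (t : ℕ) :
    armCost pull C b (t + 1) = armCost pull C b t + if pull (t + 1) = b then C (t + 1) else 0 := by
  simp only [armCost, sum_filter]
  exact sum_Icc_succ_top (by omega) _

lemma sum_armCost [Fintype ι] (t : ℕ) : ∑ b, armCost pull C b t = totalCost C t :=
  sum_fiberwise _ _ _

lemma armCost_div_pullCount_mul (b : ι) (t : ℕ) :
    armCost pull C b t / pullCount pull b t * pullCount pull b t = armCost pull C b t :=
  div_mul_cancel_of_imp fun h => by
    rw [armCost, card_eq_zero.1 (Nat.cast_eq_zero.1 h), sum_empty]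

lemma armCost_le_pullCount (hC : ∀ s, 1 ≤ s → C s ≤ 1) (b : ι) (t : ℕ) :
    armCost pull C b t ≤ pullCount pull b t := by
  have h := sum_le_card_nsmul ((Icc 1 t).filter fun s => pull s = b) C 1
    fun s hs => hC s (mem_Icc.1 (mem_filter.1 hs).1).1
  simpa [armCost, pullCount] using h

lemma mul_le_totalCost (hC : ∀ s, 1 ≤ s → ℓ ≤ C s) (t : ℕ) : ℓ * t ≤ totalCost C t := by
  have h := card_nsmul_le_sum (Icc 1 t) C ℓ fun s hs => hC s (mem_Icc.1 hs).1
  simpa [totalCost, mul_comm] using h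

lemma totalCost_mono (hC : ∀ s, 1 ≤ s → 0 ≤ C s) : Monotone (totalCost C) :=
  monotone_nat_of_le_succ fun t => by
    rw [totalCost_succ]
    linarith [hC (t + 1) (by omega)]

lemma tendsto_totalCost_atTop (hℓ : 0 < ℓ) (hC : ∀ s, 1 ≤ s → ℓ ≤ C s) :
    Tendsto (totalCost C) atTop atTop :=
  tendsto_atTop_mono (mul_le_totalCost hC) (tendsto_natCast_atTop_atTop.const_mul_atTop hℓ)

lemma armCost_pull_le_max [Fintype ι] {what : ℕ → ι → ℝ} {t₀ t : ℕ}
    (hrule : FollowsCTAS pull C what t₀) (hC : ∀ s, 1 ≤ s → C s ≤ 1)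
    (hwhat : ∑ b, what t b = 1) (ht : t₀ ≤ t) :
    armCost pull C (pull (t + 1)) t ≤ max (totalCost C t * what t (pull (t + 1))) √t := by
  by_cases hforced : ∃ b, (pullCount pull b t : ℝ) < √t
  · obtain ⟨b, hb⟩ := hforced
    have hleast := (hrule t ht).1 ⟨b, hb⟩ b
    refine le_max_of_le_right ?_
    calc armCost pull C (pull (t + 1)) t ≤ pullCount pull (pull (t + 1)) t :=
          armCost_le_pullCount pull hC _ _
      _ ≤ pullCount pull b t := by exact_mod_cast hleast
      _ ≤ √t := hb.le
  · have hdeficits : ∑ _b : ι, (0 : ℝ) ≤ ∑ b, (totalCost C t * what t b - armCost pull C b t) := by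
      rw [sum_sub_distrib, ← mul_sum, hwhat, sum_armCost]
      simp
    obtain ⟨b, -, hb⟩ := exists_le_of_sum_le ⟨pull (t + 1), mem_univ _⟩ hdeficits
    have hgreedy := (hrule t ht).2 hforced b
    exact le_max_of_le_left (by linarith)

lemma eventually_armCost_le [Fintype ι] {what : ℕ → ι → ℝ} {t₀ : ℕ} {w ε : ℝ}
    (hrule : FollowsCTAS pull C what t₀) (hℓ : 0 < ℓ)
    (hC : ∀ s, 1 ≤ s → C s ∈ Set.Icc ℓ 1) (hwhat : ∀ t, t₀ ≤ t → ∑ b, what t b = 1) {b : ι}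
    (hconv : Tendsto (what · b) atTop (𝓝 w)) (hw : 0 ≤ w) (hε : 0 < ε) :
    ∀ᶠ t in atTop, armCost pull C b t ≤ totalCost C t * (w + ε) := by
  have hJ_mono : Monotone (totalCost C) := totalCost_mono fun s hs => hℓ.le.trans (hC s hs).1
  refine eventually_le_of_eventually_le_max (hJ_mono.mul_const (by linarith))
    ((tendsto_totalCost_atTop hℓ fun s hs => (hC s hs).1).atTop_mul_const (by linarith)) ?_
  filter_upwards [eventually_ge_atTop t₀,
    hconv.eventually_lt_const (show w < w + ε / 2 by linarith),
    eventually_sqrt_add_one_le_mul (show 0 < ε / 2 * ℓ by positivity)] with t ht hwt hsqrt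
  rw [armCost_succ]
  split_ifs with hpull
  · have hJ : ℓ * t ≤ totalCost C t := mul_le_totalCost (fun s hs => (hC s hs).1) t
    have hJ0 : 0 ≤ totalCost C t := (mul_nonneg hℓ.le t.cast_nonneg).trans hJ
    have hmax := armCost_pull_le_max pull hrule (fun s hs => (hC s hs).2) (hwhat t ht) ht
    rw [hpull] at hmax
    have hroom : √t + 1 ≤ ε / 2 * totalCost C t := hsqrt.trans (by nlinarith)
    refine le_max_of_le_right ?_
    calc armCost pull C b t + C (t + 1) ≤ max (totalCost C t * what t b + 1) (√t + 1) := by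
          rw [max_add_add_right]
          exact add_le_add hmax (hC _ (by omega)).2
      _ ≤ totalCost C t * (w + ε) := by
          have hwJ := mul_le_mul_of_nonneg_left hwt.le hJ0
          have hJw := mul_nonneg hJ0 hw
          apply max_le <;> linarith [Real.sqrt_nonneg t]
      _ ≤ totalCost C (t + 1) * (w + ε) :=
          mul_le_mul_of_nonneg_right (hJ_mono t.le_succ) (by linarith)
  · simp

end CostBandit

open CostBandit

theorem ctas_cost_proportion_convergence_general
    (K : ℕ) (ℓ : ℝ) (hℓ : ℓ ∈ Set.Ioc (0 : ℝ) 1)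
    (pull : ℕ → Fin K) (C : ℕ → ℝ)
    (hC : ∀ t : ℕ, 1 ≤ t → C t ∈ Set.Icc ℓ 1)
    (what : ℕ → Fin K → ℝ) (wstar : Fin K → ℝ) :
    let N : Fin K → ℕ → ℕ := fun b t => ((Finset.Icc 1 t).filter fun s => pull s = b).card
    let chat : Fin K → ℕ → ℝ := fun b t =>
      (∑ s ∈ (Finset.Icc 1 t).filter fun s => pull s = b, C s) / (N b t : ℝ)
    let J : ℕ → ℝ := fun t => ∑ s ∈ Finset.Icc 1 t, C s
    (∀ b : Fin K, pull (b.val + 1) = b) →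
    (∀ t : ℕ, K ≤ t → (∀ b, 0 ≤ what t b) ∧ ∑ b, what t b = 1) →
    ((∀ b, 0 ≤ wstar b) ∧ ∑ b, wstar b = 1) →
    (∀ t : ℕ, K ≤ t →
      ((∃ b : Fin K, (N b t : ℝ) < Real.sqrt t) →
        ∀ b : Fin K, N (pull (t + 1)) t ≤ N b t) ∧
      ((¬ ∃ b : Fin K, (N b t : ℝ) < Real.sqrt t) →
        ∀ b : Fin K, J t * what t b - chat b t * (N b t : ℝ) ≤
          J t * what t (pull (t + 1)) - chat (pull (t + 1)) t * (N (pull (t + 1)) t : ℝ))) →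
    (∀ b : Fin K, Tendsto (fun t => what t b) atTop (nhds (wstar b))) →
    ∀ b : Fin K,
      Tendsto (fun t => chat b t * (N b t : ℝ) / J t) atTop (nhds (wstar b)) := by
  intro N chat J _ hwhat hwstar hrule hconv
  have hchatN : ∀ b t, chat b t * N b t = armCost pull C b t := armCost_div_pullCount_mul pull
  have hctas : FollowsCTAS pull C what K := fun t ht => by
    have h := hrule t ht
    simp only [hchatN] at h
    exact h
  have hJ_pos : ∀ᶠ t in atTop, 0 < totalCost C t :=
    (tendsto_totalCost_atTop hℓ.1 fun s hs => (hC s hs).1).eventually_gt_atTop 0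
  simp only [hchatN]
  refine tendsto_of_sum_eq_of_eventually_le (p := fun t b => armCost pull C b t / totalCost C t) ?_
    (fun ε hε b => ?_)
  · filter_upwards [hJ_pos] with t hJ
    rw [← sum_div, sum_armCost, div_self hJ.ne', hwstar.2]
  · filter_upwards [hJ_pos, eventually_armCost_le pull hctas hℓ.1 hC (fun t ht => (hwhat t ht).2)
      (hconv b) (hwstar.1 b) hε] with t hJ hb
    rwa [div_le_iff₀' hJ]

/-- deterministic content of Theorem 6: under the CTAS
sampling rule (forced exploration of under-sampled arms, otherwise pull the
arm with the largest cost deficit `J(t)·ŵ*_a(t) − ĉ_a(t)·N_a(t)`), if the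
plug-in proportions `ŵ*(t)` converge to `w*`, then the empirical proportion
of cumulative cost spent on each arm, `ĉ_a(t)N_a(t)/J(t)`, converges to
`w*_a`. Arm pulls happen at rounds `t ≥ 1` and costs lie in `[ℓ,1]`. -/
theorem ctas_cost_proportion_convergence
    (K : ℕ) (hK : 2 ≤ K) (ℓ : ℝ) (hℓ : ℓ ∈ Set.Ioc (0 : ℝ) 1)
    (pull : ℕ → Fin K) (C : ℕ → ℝ)
    (hC : ∀ t : ℕ, 1 ≤ t → C t ∈ Set.Icc ℓ 1)
    (what : ℕ → Fin K → ℝ) (wstar : Fin K → ℝ) :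
    let N : Fin K → ℕ → ℕ := fun b t => ((Finset.Icc 1 t).filter fun s => pull s = b).card
    let chat : Fin K → ℕ → ℝ := fun b t =>
      (∑ s ∈ (Finset.Icc 1 t).filter fun s => pull s = b, C s) / (N b t : ℝ)
    let J : ℕ → ℝ := fun t => ∑ s ∈ Finset.Icc 1 t, C s
    (∀ b : Fin K, pull (b.val + 1) = b) →
    (∀ t : ℕ, K ≤ t → (∀ b, 0 ≤ what t b) ∧ ∑ b, what t b = 1) →
    ((∀ b, 0 ≤ wstar b) ∧ ∑ b, wstar b = 1) →
    (∀ t : ℕ, K ≤ t →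
      ((∃ b : Fin K, (N b t : ℝ) < Real.sqrt t) →
        ∀ b : Fin K, N (pull (t + 1)) t ≤ N b t) ∧
      ((¬ ∃ b : Fin K, (N b t : ℝ) < Real.sqrt t) →
        ∀ b : Fin K, J t * what t b - chat b t * (N b t : ℝ) ≤
          J t * what t (pull (t + 1)) - chat (pull (t + 1)) t * (N (pull (t + 1)) t : ℝ))) →
    (∀ b : Fin K, Tendsto (fun t => what t b) atTop (nhds (wstar b))) →
    ∀ b : Fin K,
      Tendsto (fun t => chat b t * (N b t : ℝ) / J t) atTop (nhds (wstar b)) :=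
  ctas_cost_proportion_convergence_general K ℓ hℓ pull C hC what wstar
end

section
/- Let α ∈ [1, e/2] and let c₁, c₂ > 0 satisfy c₂ ≥ e·c₁^α (so that log log(c₂/c₁^α) is well defined and nonnegative). Then x = (α/c₁)·[ log(c₂·e/c₁^α) + log log(c₂/c₁^α) ] satisfies c₁·x ≥ log(c₂·x^α). (Lemma 18, the technical inversion bound used to solve J ≤ C·log(B·J^α/δ)-type recursions in the cost upper bound proofs.) -/
/-- Lemma 18: for `α ∈ [1, e/2]`, `c₁, c₂ > 0` with
`c₂ ≥ e·c₁^α`, the explicit point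
`x = (α/c₁)·[log(c₂ e/c₁^α) + log log(c₂/c₁^α)]`
satisfies `c₁·x ≥ log(c₂·x^α)`. Here `^` is the real power `rpow`. -/
theorem technical_inversion_bound
    (α c₁ c₂ : ℝ)
    (hα : α ∈ Set.Icc 1 (Real.exp 1 / 2))
    (hc₁ : 0 < c₁) (hc₂ : 0 < c₂)
    (hbig : Real.exp 1 * c₁ ^ α ≤ c₂)
    (x : ℝ)
    (hx : x = (α / c₁) * (Real.log (c₂ * Real.exp 1 / c₁ ^ α) +
      Real.log (Real.log (c₂ / c₁ ^ α)))) :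
    Real.log (c₂ * x ^ α) ≤ c₁ * x := by
  obtain ⟨hα1, hα2⟩ := hα
  have hα0 : (0:ℝ) < α := by linarith
  have hc₁α : (0:ℝ) < c₁ ^ α := Real.rpow_pos_of_pos hc₁ α
  have ht' : Real.exp 1 ≤ c₂ / c₁ ^ α := (le_div_iff₀ hc₁α).2 (by linarith)
  have ht0 : (0:ℝ) < c₂ / c₁ ^ α := lt_of_lt_of_le (Real.exp_pos 1) ht'
  set L := Real.log (c₂ / c₁ ^ α) with hLdef
  have hL1 : 1 ≤ L := by
    have h := Real.log_le_log (Real.exp_pos 1) ht'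
    simpa [Real.log_exp] using h
  have hL0 : (0:ℝ) < L := by linarith
  have hlogL0 : 0 ≤ Real.log L := Real.log_nonneg hL1
  set S := L + 1 + Real.log L with hSdef
  have hS2 : (2:ℝ) ≤ S := by linarith
  have hS0 : (0:ℝ) < S := by linarith
  have hxval : x = (α / c₁) * S := by
    rw [hx]
    congr 1
    have h1 : c₂ * Real.exp 1 / c₁ ^ α = (c₂ / c₁ ^ α) * Real.exp 1 := by ring
    rw [h1, Real.log_mul (ne_of_gt ht0) (Real.exp_ne_zero 1), Real.log_exp, ← hLdef, hSdef]
  have hx0 : 0 < x := by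
    rw [hxval]; positivity
  have hLeq : L = Real.log c₂ - α * Real.log c₁ := by
    rw [hLdef, Real.log_div (ne_of_gt hc₂) (ne_of_gt hc₁α), Real.log_rpow hc₁]
  have hlogx : Real.log x = Real.log α - Real.log c₁ + Real.log S := by
    rw [hxval, Real.log_mul (by positivity) (ne_of_gt hS0),
      Real.log_div (ne_of_gt hα0) (ne_of_gt hc₁)]
  have hLHS : Real.log (c₂ * x ^ α) = L + α * (Real.log α + Real.log S) := by
    rw [Real.log_mul (ne_of_gt hc₂) (ne_of_gt (Real.rpow_pos_of_pos hx0 α)),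
      Real.log_rpow hx0, hlogx, hLeq]
    ring
  have hRHS : c₁ * x = α * S := by
    rw [hxval]; field_simp
  rw [hLHS, hRHS]
  -- key bounds
  have hlogα : Real.log α ≤ 1 - Real.log 2 := by
    have h := Real.log_le_log hα0 hα2
    rwa [Real.log_div (Real.exp_ne_zero 1) two_ne_zero, Real.log_exp] at h
  have hS2L : S ≤ 2 * L := by
    have := Real.log_le_sub_one_of_pos hL0
    linarith
  have hlogS : Real.log S ≤ Real.log 2 + Real.log L := by
    have h := Real.log_le_log hS0 hS2L
    rwa [Real.log_mul two_ne_zero (ne_of_gt hL0)] at h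
  have hkey : Real.log α + Real.log S ≤ S - L := by
    rw [hSdef]; linarith
  have h1 : α * (Real.log α + Real.log S) ≤ α * (S - L) :=
    mul_le_mul_of_nonneg_left hkey hα0.le
  nlinarith [mul_le_mul_of_nonneg_right hα1 hL0.le]
end

section
/- Let ℓ ∈ (0,1] and c₁, c₂ ∈ [ℓ,1]. Consider a two-armed pulling scheme: a sequence (a_t)_{t≥1} with a_t ∈ {1,2}, both arms pulled once initially, per-pull costs in [ℓ,1]; let N_i(t) be the number of pulls of arm i up to time t, ĉ_i(t) the empirical mean cost of arm i, and J(t) = ĉ₁(t)N₁(t) + ĉ₂(t)N₂(t) the cumulative cost. Suppose the sampling rule is: at each round t+1 (t ≥ 2), pull arm 2 if √(ĉ₂(t))·N₂(t) ≤ √(ĉ₁(t))·N₁(t), and otherwise pull arm 1. If ĉ_i(t) → c_i as t → ∞ for i = 1,2, then ĉ_i(t)·N_i(t)/J(t) → √(c_i)/(√c₁ + √c₂) as t → ∞ for i = 1,2. (Deterministic content of Lemma 20: under the Chernoff-Overlap square-root sampling rule in a two-armed bandit, the empirical cost proportions converge to the optimal proportions √c_i/(√c₁+√c₂).) -/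
/-!
Write `sᵢ = √cᵢ`. Once the estimates `√ĉᵢ` are within `δ` of `sᵢ`, the rule pulls the arm that
moves the gap `D(t) = s₀N₀(t) - s₁N₁(t)` towards `0` unless `|D(t)| ≤ δt`, so
`|D(t+1)| ≤ max(|D(t)|, δt + s₀ + s₁)` and therefore `D(t) = o(t)`. Together with `N₀ + N₁ = t`
this gives `sᵢNᵢ(t)/t → s₀s₁/(s₀+s₁)`, so the cost rate `ĉᵢNᵢ/t ≈ sᵢ²Nᵢ/t` of arm `i` becomes
proportional to `sᵢ`.
-/

open Filter Topology Asymptotics Finset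

theorem le_max_of_succ_le_max {β : Type*} [LinearOrder β] {u g : ℕ → β} (hg : Monotone g)
    {T : ℕ} (h : ∀ t ≥ T, u (t + 1) ≤ max (u t) (g t)) :
    ∀ t ≥ T, u t ≤ max (u T) (g t) := by
  intro t ht
  induction t, ht using Nat.le_induction with
  | base => exact le_max_left _ _
  | succ t ht ih =>
    calc u (t + 1) ≤ max (u t) (g t) := h t ht
      _ ≤ max (u T) (g t) := max_le ih (le_max_right _ _)
      _ ≤ max (u T) (g (t + 1)) := max_le_max le_rfl (hg t.le_succ)

theorem tendsto_div_sum_of_tendsto_div {ι α : Type*} [Fintype ι] {l : Filter α}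
    {f : ι → α → ℝ} {g : α → ℝ} {v : ι → ℝ} (hf : ∀ i, Tendsto (fun x => f i x / g x) l (𝓝 (v i)))
    (hg : ∀ᶠ x in l, g x ≠ 0) (hv : ∑ j, v j ≠ 0) (i : ι) :
    Tendsto (fun x => f i x / ∑ j, f j x) l (𝓝 (v i / ∑ j, v j)) := by
  refine ((hf i).div (tendsto_finsetSum _ fun j _ => hf j) hv).congr' ?_
  filter_upwards [hg] with x hx
  simp only [Pi.div_apply, ← Finset.sum_div, div_div_div_cancel_right₀ hx]

section PullCount

variable {α : Type*} [DecidableEq α] (pull : ℕ → α)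

def pullCount (i : α) (t : ℕ) : ℕ := #{s ∈ Icc 1 t | pull s = i}

theorem pullCount_succ (i : α) (t : ℕ) :
    pullCount pull i (t + 1) = pullCount pull i t + if pull (t + 1) = i then 1 else 0 := by
  simp only [pullCount, card_filter]
  exact sum_Icc_succ_top (by omega) _

theorem sum_pullCount [Fintype α] (t : ℕ) : ∑ i, pullCount pull i t = t :=
  (card_eq_sum_card_fiberwise fun _ _ => mem_univ _).symm.trans (by simp)

end PullCount

section TwoArms

variable (pull : ℕ → Fin 2) (s : Fin 2 → ℝ)

def pullGap (t : ℕ) : ℝ := s 0 * pullCount pull 0 t - s 1 * pullCount pull 1 t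

theorem pullCount_zero_add_pullCount_one (t : ℕ) :
    (pullCount pull 0 t : ℝ) + pullCount pull 1 t = t := by
  exact_mod_cast (Fin.sum_univ_two _).symm.trans (sum_pullCount pull t)

theorem pullGap_succ (t : ℕ) :
    pullGap pull s (t + 1) = pullGap pull s t + if pull (t + 1) = 0 then s 0 else -s 1 := by
  unfold pullGap
  rw [pullCount_succ, pullCount_succ]
  rcases Fin.exists_fin_two.1 ⟨pull (t + 1), rfl⟩ with h | h <;>
    simp only [h, ↓reduceIte, zero_ne_one, one_ne_zero, Nat.cast_add, Nat.cast_one, add_zero] <;>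
    ring

variable {pull s}

theorem abs_pullGap_succ_le {a : Fin 2 → ℝ} {δ : ℝ} {t : ℕ} (hs : ∀ i, 0 ≤ s i)
    (ha : ∀ i, |a i - s i| ≤ δ)
    (hpull : pull (t + 1) =
      if a 1 * pullCount pull 1 t ≤ a 0 * pullCount pull 0 t then 1 else 0) :
    |pullGap pull s (t + 1)| ≤ max |pullGap pull s t| (δ * t + (s 0 + s 1)) := by
  obtain ⟨ha0, ha0'⟩ := abs_le.1 (ha 0)
  obtain ⟨ha1, ha1'⟩ := abs_le.1 (ha 1)
  have hn0 : (0 : ℝ) ≤ pullCount pull 0 t := Nat.cast_nonneg _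
  have hn1 : (0 : ℝ) ≤ pullCount pull 1 t := Nat.cast_nonneg _
  have hδt : δ * t = δ * pullCount pull 0 t + δ * pullCount pull 1 t := by
    rw [← pullCount_zero_add_pullCount_one pull t, mul_add]
  have hle := le_abs_self (pullGap pull s t)
  have hge := neg_abs_le (pullGap pull s t)
  have hmax := le_max_left |pullGap pull s t| (δ * t + (s 0 + s 1))
  have hmax' := le_max_right |pullGap pull s t| (δ * t + (s 0 + s 1))
  have h0 := hs 0
  have h1 := hs 1
  by_cases h : a 1 * pullCount pull 1 t ≤ a 0 * pullCount pull 0 t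
  · have hgap : -(δ * t) ≤ pullGap pull s t := by
      unfold pullGap
      linarith [mul_nonneg (neg_le_iff_add_nonneg.1 ha1) hn1,
        mul_nonneg (sub_nonneg.2 ha0') hn0]
    rw [pullGap_succ, hpull, if_pos h, if_neg one_ne_zero]
    exact abs_le.2 ⟨by linarith, by linarith⟩
  · have hgap : pullGap pull s t ≤ δ * t := by
      unfold pullGap
      linarith [mul_nonneg (neg_le_iff_add_nonneg.1 ha0) hn0,
        mul_nonneg (sub_nonneg.2 ha1') hn1]
    rw [pullGap_succ, hpull, if_neg h, if_pos rfl]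
    exact abs_le.2 ⟨by linarith, by linarith⟩

theorem pullGap_isLittleO {a : Fin 2 → ℕ → ℝ} (hs : ∀ i, 0 ≤ s i)
    (ha : ∀ i, Tendsto (a i) atTop (𝓝 (s i)))
    (hrule : ∀ᶠ t in atTop, pull (t + 1) =
      if a 1 t * pullCount pull 1 t ≤ a 0 t * pullCount pull 0 t then 1 else 0) :
    pullGap pull s =o[atTop] (fun t => (t : ℝ)) := by
  refine isLittleO_iff.2 fun ε hε => ?_
  have hδ : 0 < ε / 2 := half_pos hε
  have hclose : ∀ᶠ t in atTop, ∀ i, |a i t - s i| ≤ ε / 2 :=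
    eventually_all.2 fun i => (ha i).eventually (Metric.closedBall_mem_nhds (s i) hδ)
  obtain ⟨T, hT⟩ := eventually_atTop.1 (hclose.and hrule)
  have hbound : ∀ t ≥ T, |pullGap pull s t| ≤ max |pullGap pull s T| (ε / 2 * t + (s 0 + s 1)) :=
    le_max_of_succ_le_max (fun _ _ h => by gcongr) fun t ht =>
      abs_pullGap_succ_le hs (hT t ht).1 (hT t ht).2
  have hlarge : ∀ᶠ t : ℕ in atTop, |pullGap pull s T| + (s 0 + s 1) ≤ ε / 2 * t :=
    (tendsto_natCast_atTop_atTop.const_mul_atTop hδ).eventually_ge_atTop _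
  filter_upwards [eventually_ge_atTop T, hlarge] with t ht hlt
  have hS : 0 ≤ s 0 + s 1 := add_nonneg (hs 0) (hs 1)
  have ht0 : 0 ≤ ε / 2 * t := by positivity
  have hT0 := abs_nonneg (pullGap pull s T)
  rw [Real.norm_eq_abs, Real.norm_natCast]
  exact (hbound t ht).trans (max_le (by linarith) (by linarith))

theorem tendsto_mul_pullCount_div (hs : s 0 + s 1 ≠ 0)
    (hgap : pullGap pull s =o[atTop] (fun t => (t : ℝ))) (i : Fin 2) :
    Tendsto (fun t => s i * pullCount pull i t / t) atTop (𝓝 (s 0 * s 1 / (s 0 + s 1))) := by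
  have hD := hgap.tendsto_div_nhds_zero
  revert i
  rw [Fin.forall_fin_two]
  constructor
  · have := ((hD.const_mul (s 0)).const_add (s 0 * s 1)).div_const (s 0 + s 1)
    rw [mul_zero, add_zero] at this
    refine this.congr' ?_
    filter_upwards [eventually_ne_atTop 0] with t ht
    have hsum := pullCount_zero_add_pullCount_one pull t
    have ht' : (t : ℝ) ≠ 0 := Nat.cast_ne_zero.2 ht
    unfold pullGap
    field_simp
    linear_combination -(s 0 * s 1) * hsum
  · have := ((hD.const_mul (s 1)).const_sub (s 0 * s 1)).div_const (s 0 + s 1)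
    rw [mul_zero, sub_zero] at this
    refine this.congr' ?_
    filter_upwards [eventually_ne_atTop 0] with t ht
    have hsum := pullCount_zero_add_pullCount_one pull t
    have ht' : (t : ℝ) ≠ 0 := Nat.cast_ne_zero.2 ht
    unfold pullGap
    field_simp
    linear_combination -(s 0 * s 1) * hsum

end TwoArms

theorem chernoff_overlap_proportion_convergence_general
    (ℓ : ℝ) (hℓ : ℓ ∈ Set.Ioc (0 : ℝ) 1)
    (c : Fin 2 → ℝ) (hc : ∀ i, c i ∈ Set.Icc ℓ 1)
    (pull : ℕ → Fin 2) (C : ℕ → ℝ) :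
    let N : Fin 2 → ℕ → ℕ := fun i t => ((Finset.Icc 1 t).filter fun s => pull s = i).card
    let chat : Fin 2 → ℕ → ℝ := fun i t =>
      (∑ s ∈ (Finset.Icc 1 t).filter fun s => pull s = i, C s) / (N i t : ℝ)
    let J : ℕ → ℝ := fun t => chat 0 t * (N 0 t : ℝ) + chat 1 t * (N 1 t : ℝ)
    pull 1 = 0 → pull 2 = 1 →
    (∀ t : ℕ, 2 ≤ t →
      pull (t + 1) =
        if Real.sqrt (chat 1 t) * (N 1 t : ℝ) ≤ Real.sqrt (chat 0 t) * (N 0 t : ℝ)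
        then (1 : Fin 2) else 0) →
    (∀ i : Fin 2, Tendsto (fun t => chat i t) atTop (nhds (c i))) →
    ∀ i : Fin 2,
      Tendsto (fun t => chat i t * (N i t : ℝ) / J t) atTop
        (nhds (Real.sqrt (c i) / (Real.sqrt (c 0) + Real.sqrt (c 1)))) := by
  intro N chat J _ _ hrule hconv i
  have hc_pos : ∀ i, 0 < c i := fun i => hℓ.1.trans_le (hc i).1
  set s : Fin 2 → ℝ := fun i => √(c i) with hs_def
  have hs : ∀ i, 0 < s i := fun i => Real.sqrt_pos.2 (hc_pos i)
  have hgap : pullGap pull s =o[atTop] (fun t => (t : ℝ)) :=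
    pullGap_isLittleO (fun i => (hs i).le) (fun i => (hconv i).sqrt)
      (eventually_atTop.2 ⟨2, hrule⟩)
  have hs01 : 0 < s 0 + s 1 := add_pos (hs 0) (hs 1)
  have hcount := tendsto_mul_pullCount_div hs01.ne' hgap
  set P := s 0 * s 1 / (s 0 + s 1)
  have hP : P ≠ 0 := div_ne_zero (mul_pos (hs 0) (hs 1)).ne' hs01.ne'
  have hcost : ∀ i, Tendsto (fun t => chat i t * N i t / t) atTop (𝓝 (s i * P)) := by
    intro i
    have hci : c i / s i = s i := by
      rw [div_eq_iff (hs i).ne', hs_def, Real.mul_self_sqrt (hc_pos i).le]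
    have := ((hconv i).div_const (s i)).mul (hcount i)
    rw [hci] at this
    refine this.congr fun t => ?_
    field_simp [(hs i).ne']
    rfl
  have hshare := tendsto_div_sum_of_tendsto_div hcost
    (eventually_ne_atTop 0 |>.mono fun _ => Nat.cast_ne_zero.2)
    (by simpa only [Fin.sum_univ_two, ← add_mul] using mul_ne_zero hs01.ne' hP) i
  simpa only [Fin.sum_univ_two, ← add_mul, mul_div_mul_right _ _ hP] using hshare

/-- deterministic content of Lemma 20: under the
Chernoff-Overlap square-root sampling rule in a two-armed bandit (arm `0`
plays the role of arm 1 and arm `1` the role of arm 2; at round `t+1` arm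
`1` is pulled iff `√(ĉ₁(t))·N₁(t) ≤ √(ĉ₀(t))·N₀(t)`), if the empirical
mean costs converge to `c_i ∈ [ℓ,1]`, then the empirical cost proportions
`ĉ_i(t)N_i(t)/J(t)` converge to `√c_i/(√c₀+√c₁)`. -/
theorem chernoff_overlap_proportion_convergence
    (ℓ : ℝ) (hℓ : ℓ ∈ Set.Ioc (0 : ℝ) 1)
    (c : Fin 2 → ℝ) (hc : ∀ i, c i ∈ Set.Icc ℓ 1)
    (pull : ℕ → Fin 2) (C : ℕ → ℝ)
    (hC : ∀ t : ℕ, 1 ≤ t → C t ∈ Set.Icc ℓ 1) :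
    let N : Fin 2 → ℕ → ℕ := fun i t => ((Finset.Icc 1 t).filter fun s => pull s = i).card
    let chat : Fin 2 → ℕ → ℝ := fun i t =>
      (∑ s ∈ (Finset.Icc 1 t).filter fun s => pull s = i, C s) / (N i t : ℝ)
    let J : ℕ → ℝ := fun t => chat 0 t * (N 0 t : ℝ) + chat 1 t * (N 1 t : ℝ)
    pull 1 = 0 → pull 2 = 1 →
    (∀ t : ℕ, 2 ≤ t →
      pull (t + 1) =
        if Real.sqrt (chat 1 t) * (N 1 t : ℝ) ≤ Real.sqrt (chat 0 t) * (N 0 t : ℝ)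
        then (1 : Fin 2) else 0) →
    (∀ i : Fin 2, Tendsto (fun t => chat i t) atTop (nhds (c i))) →
    ∀ i : Fin 2,
      Tendsto (fun t => chat i t * (N i t : ℝ) / J t) atTop
        (nhds (Real.sqrt (c i) / (Real.sqrt (c 0) + Real.sqrt (c 1)))) :=
  chernoff_overlap_proportion_convergence_general ℓ hℓ c hc pull C
end
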